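/- Let k ≥ 2, let F : ℝ^k → ℝ be interchangeable (i.e., invariant under all permutations of its arguments) and three times continuously differentiable on a neighborhood of the diagonal point a·𝟙 = (a,…,a), set α := (1/2)(∂²F/∂μ_1∂μ_1(a·𝟙) − ∂²F/∂μ_1∂μ_2(a·𝟙)), and let h = (h_1,…,h_k) ∈ ℝ^k satisfy ∑_{i=1}^k h_i = 0. Then, as ε → 0, F(a·𝟙 + εh) = F(a·𝟙) + α ε² ∑_{i=1}^k h_i² + O(ε³). -/

import Mathlib

/-!
Write `c = a • 𝟙`. The coordinate permutations `μ ↦ μ ∘ σ` are continuous linear equivalences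
fixing `c` and leaving `F` invariant, so `DF(c)` and `D²F(c)` are permutation-invariant forms.
An invariant linear form is a multiple of `μ ↦ ∑ μᵢ`, and an invariant bilinear form is a
combination of `∑ μᵢ νᵢ` and `(∑ μᵢ)(∑ νᵢ)`; hence, when `∑ hᵢ = 0`, `DF(c) h = 0` and
`D²F(c) h h = 2α ∑ hᵢ²`. The claim is then the second-order Taylor expansion of
`ε ↦ F(c + ε h)`, whose remainder is `O(ε³)` because `D²F` is differentiable at `c`:
integrating a derivative that is `O(ε^m)` gives a function that is `O(ε^(m+1))`.
-/

open Asymptotics Filter Topology Metric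

theorem isBigO_pow_succ_of_hasDerivAt {G : Type*} [NormedAddCommGroup G] [NormedSpace ℝ G]
    {u u' : ℝ → G} {m : ℕ} (hu : u 0 = 0) (hderiv : ∀ᶠ t in 𝓝 0, HasDerivAt u (u' t) t)
    (hu' : u' =O[𝓝 0] (· ^ m)) : u =O[𝓝 0] (· ^ (m + 1)) := by
  obtain ⟨C, hC, hCu'⟩ := hu'.exists_nonneg
  obtain ⟨δ, hδ, hball⟩ := eventually_nhds_iff_ball.1 (hderiv.and hCu'.bound)
  refine IsBigO.of_bound C (eventually_nhds_iff_ball.2 ⟨δ, hδ, fun x hx => ?_⟩)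
  have hsub : closedBall (0 : ℝ) ‖x‖ ⊆ ball 0 δ := closedBall_subset_ball (by simpa using hx)
  have hbound : ‖u x - u 0‖ ≤ C * ‖x‖ ^ m * ‖x - 0‖ :=
    Convex.norm_image_sub_le_of_norm_hasDerivWithin_le
    (fun t ht => (hball t (hsub ht)).1.hasDerivWithinAt)
    (fun t ht => (hball t (hsub ht)).2.trans (by
      rw [norm_pow]; gcongr; simpa using ht))
    (convex_closedBall 0 ‖x‖) (mem_closedBall_self (norm_nonneg x)) (by simp)
  simpa [hu, norm_pow, pow_succ, mul_assoc] using hbound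

section Taylor

variable {E G : Type*} [NormedAddCommGroup E] [NormedSpace ℝ E]
  [NormedAddCommGroup G] [NormedSpace ℝ G]

theorem HasFDerivAt.hasDerivAt_add_smul {H : Type*} [NormedAddCommGroup H] [NormedSpace ℝ H]
    {Φ : E → H} {Φ' : E →L[ℝ] H} {x v : E} {ε : ℝ} (hΦ : HasFDerivAt Φ Φ' (x + ε • v)) :
    HasDerivAt (fun t : ℝ => Φ (x + t • v)) (Φ' v) ε :=
  hΦ.comp_hasDerivAt ε (by simpa using ((hasDerivAt_id ε).smul_const v).const_add x)

theorem ContDiffAt.isBigO_taylor_two {F : E → G} {x : E} (hF : ContDiffAt ℝ 3 F x) (v : E) :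
    (fun ε : ℝ => F (x + ε • v) - F x - ε • fderiv ℝ F x v -
      (ε ^ 2 / 2) • fderiv ℝ (fderiv ℝ F) x v v) =O[𝓝 0] (· ^ 3) := by
  have hsmooth : ∀ᶠ ε : ℝ in 𝓝 0, ContDiffAt ℝ 3 F (x + ε • v) :=
    (Continuous.tendsto' (by fun_prop) 0 x (by simp)).eventually (hF.eventually (by simp))
  have hD2 : DifferentiableAt ℝ (fun y => fderiv ℝ (fderiv ℝ F) y v v) (x + (0 : ℝ) • v) := by
    rw [zero_smul, add_zero]
    exact ((((hF.fderiv_right (m := 2) (by norm_num)).fderiv_right (m := 1)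
      (by norm_num)).differentiableAt (by norm_num)).clm_apply (differentiableAt_const v)).clm_apply
      (differentiableAt_const v)
  have hO1 : (fun ε : ℝ => fderiv ℝ (fderiv ℝ F) (x + ε • v) v v - fderiv ℝ (fderiv ℝ F) x v v)
      =O[𝓝 0] (· ^ 1) := by
    simpa using hD2.hasFDerivAt.hasDerivAt_add_smul.differentiableAt.isBigO_sub
  have hO2 : (fun ε : ℝ => fderiv ℝ F (x + ε • v) v - fderiv ℝ F x v -
      ε • fderiv ℝ (fderiv ℝ F) x v v) =O[𝓝 0] (· ^ 2) := by
    refine isBigO_pow_succ_of_hasDerivAt (by simp) ?_ hO1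
    filter_upwards [hsmooth] with ε hε
    have hD1 : HasDerivAt (fun t : ℝ => fderiv ℝ F (x + t • v) v)
        (fderiv ℝ (fderiv ℝ F) (x + ε • v) v v) ε := by
      simpa using (((hε.fderiv_right (m := 2) (by norm_num)).differentiableAt
        (by norm_num)).hasFDerivAt.clm_apply (hasFDerivAt_const v _)).hasDerivAt_add_smul
    exact ((hD1.sub_const (fderiv ℝ F x v)).sub
      ((hasDerivAt_id ε).smul_const (fderiv ℝ (fderiv ℝ F) x v v))).congr_deriv (by simp)
  refine isBigO_pow_succ_of_hasDerivAt (by simp) ?_ hO2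
  filter_upwards [hsmooth] with ε hε
  have hD0 : HasDerivAt (fun t : ℝ => F (x + t • v)) (fderiv ℝ F (x + ε • v) v) ε :=
    (hε.differentiableAt (by norm_num)).hasFDerivAt.hasDerivAt_add_smul
  exact (((hD0.sub_const (F x)).sub ((hasDerivAt_id ε).smul_const (fderiv ℝ F x v))).sub
    (((hasDerivAt_pow 2 ε).div_const 2).smul_const (fderiv ℝ (fderiv ℝ F) x v v))).congr_deriv
    (by simp)

end Taylor

section Invariance

variable {𝕜 E G : Type*} [NontriviallyNormedField 𝕜] [NormedAddCommGroup E] [NormedSpace 𝕜 E]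
  [NormedAddCommGroup G] [NormedSpace 𝕜 G]

theorem fderiv_apply_of_comp_eq {F : E → G} (e : E ≃L[𝕜] E) (hF : F ∘ e = F) (x u : E) :
    fderiv 𝕜 F (e x) (e u) = fderiv 𝕜 F x u := by
  calc fderiv 𝕜 F (e x) (e u) = fderiv 𝕜 (F ∘ e) x u := by rw [e.comp_right_fderiv]; rfl
    _ = fderiv 𝕜 F x u := by rw [hF]

theorem fderiv_fderiv_apply_of_comp_eq {F : E → G} (e : E ≃L[𝕜] E) (hF : F ∘ e = F)
    (x u v : E) :
    fderiv 𝕜 (fderiv 𝕜 F) (e x) (e u) (e v) = fderiv 𝕜 (fderiv 𝕜 F) x u v := by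
  -- `e.symm.arrowCongr (.refl 𝕜 G)` is precomposition `f ↦ f ∘L e`.
  have hF' : e.symm.arrowCongr (.refl 𝕜 G) ∘ fderiv 𝕜 F ∘ e = fderiv 𝕜 F := by
    ext y w; simp [← fderiv_apply_of_comp_eq e hF y]
  calc fderiv 𝕜 (fderiv 𝕜 F) (e x) (e u) (e v)
      = fderiv 𝕜 (e.symm.arrowCongr (.refl 𝕜 G) ∘ fderiv 𝕜 F ∘ e) x u v := by
        rw [ContinuousLinearEquiv.comp_fderiv, e.comp_right_fderiv]; simp
    _ = fderiv 𝕜 (fderiv 𝕜 F) x u v := by rw [hF']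

end Invariance

theorem Equiv.Perm.exists_apply_eq_and_apply_eq {ι : Type*} [DecidableEq ι] {i j i' j' : ι}
    (hij : i ≠ j) (hij' : i' ≠ j') :
    ∃ σ : Equiv.Perm ι, σ i = i' ∧ σ j = j' := by
  have hj : Equiv.swap i i' j ≠ i' := by
    conv_rhs => rw [← Equiv.swap_apply_left i i']
    exact (Equiv.injective _).ne hij.symm
  refine ⟨Equiv.swap (Equiv.swap i i' j) j' * Equiv.swap i i', ?_, ?_⟩
  · simp [Equiv.swap_apply_of_ne_of_ne hj.symm hij']
  · simp

section InvariantForms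

variable {ι R : Type*} [Fintype ι] [DecidableEq ι] [NormedField R]

theorem ContinuousLinearMap.apply_eq_sum_mul (L : (ι → R) →L[R] R) (u : ι → R) :
    L u = ∑ i, u i * L (Pi.single i 1) := by
  conv_lhs => rw [pi_eq_sum_univ' u]
  simp

theorem ContinuousLinearMap.apply_apply_eq_sum_sum_mul (B : (ι → R) →L[R] (ι → R) →L[R] R)
    (u v : ι → R) :
    B u v = ∑ i, ∑ j, u i * v j * B (Pi.single i 1) (Pi.single j 1) := by
  conv_lhs => rw [pi_eq_sum_univ' u, pi_eq_sum_univ' v]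
  simp only [map_sum, map_smul, FunLike.coe_sum, FunLike.coe_smul,
    Finset.sum_apply, Pi.smul_apply, smul_eq_mul, Finset.mul_sum]
  rw [Finset.sum_comm]
  exact Finset.sum_congr rfl fun _ _ => Finset.sum_congr rfl fun _ _ => by ring

theorem ContinuousLinearMap.apply_eq_mul_sum_of_comp_perm (L : (ι → R) →L[R] R)
    (hL : ∀ (σ : Equiv.Perm ι) u, L (u ∘ σ) = L u) (i : ι) (u : ι → R) :
    L u = L (Pi.single i 1) * ∑ j, u j := by
  have hsingle (j : ι) : L (Pi.single j 1) = L (Pi.single i 1) := by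
    rw [← hL (Equiv.swap i j), Pi.single_comp_equiv]; simp
  simp [L.apply_eq_sum_mul u, hsingle, Finset.sum_mul, mul_comm]

theorem ContinuousLinearMap.apply_apply_eq_of_comp_perm (B : (ι → R) →L[R] (ι → R) →L[R] R)
    (hB : ∀ (σ : Equiv.Perm ι) u v, B (u ∘ σ) (v ∘ σ) = B u v) {i j : ι} (hij : i ≠ j)
    (u : ι → R) :
    B u u = (B (Pi.single i 1) (Pi.single i 1) - B (Pi.single i 1) (Pi.single j 1)) *
        ∑ l, u l ^ 2 + B (Pi.single i 1) (Pi.single j 1) * (∑ l, u l) ^ 2 := by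
  have hdiag (l : ι) : B (Pi.single l 1) (Pi.single l 1) = B (Pi.single i 1) (Pi.single i 1) := by
    rw [← hB (Equiv.swap i l), Pi.single_comp_equiv]; simp
  have hoff {l l' : ι} (hl : l ≠ l') :
      B (Pi.single l 1) (Pi.single l' 1) = B (Pi.single i 1) (Pi.single j 1) := by
    obtain ⟨σ, hσi, hσj⟩ := Equiv.Perm.exists_apply_eq_and_apply_eq hij hl
    rw [← hB σ, Pi.single_comp_equiv, Pi.single_comp_equiv, ← hσi, ← hσj]
    simp
  set a := B (Pi.single i 1) (Pi.single i 1)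
  set b := B (Pi.single i 1) (Pi.single j 1)
  have hval (l l' : ι) : B (Pi.single l 1) (Pi.single l' 1) = b + if l = l' then a - b else 0 := by
    split_ifs with hl
    · rw [hl, hdiag]; ring
    · rw [hoff hl, add_zero]
  simp [B.apply_apply_eq_sum_sum_mul u u, hval, mul_add, Finset.sum_add_distrib, sq,
    Finset.sum_mul_sum, ← Finset.sum_mul]
  ring

end InvariantForms

def ContinuousLinearEquiv.funCongrLeft (R M : Type*) [Semiring R] [AddCommMonoid M] [Module R M]
    [TopologicalSpace M] {m n : Type*} (e : m ≃ n) : (n → M) ≃L[R] (m → M) where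
  toLinearEquiv := LinearEquiv.funCongrLeft R M e
  continuous_toFun := continuous_pi fun i => continuous_apply (e i)
  continuous_invFun := continuous_pi fun i => continuous_apply (e.symm i)

/-- The paper's improved approximation: if `F` is interchangeable and `C³` near the
diagonal, and the perturbation `h` has zero mean, then
`F(a𝟙 + εh) = F(a𝟙) + α ε² ∑ᵢ hᵢ² + O(ε³)`, where
`α = (1/2)(∂²F/∂μ₁²(a𝟙) - ∂²F/∂μ₁∂μ₂(a𝟙))`. -/
theorem improved_approximation (k : ℕ) (hk : 2 ≤ k) (F : (Fin k → ℝ) → ℝ)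
    (hsym : ∀ (σ : Equiv.Perm (Fin k)) (μ : Fin k → ℝ), F (μ ∘ σ) = F μ)
    (a : ℝ) (hF : ContDiffAt ℝ 3 F (fun _ => a)) (α : ℝ)
    (hα : α = (1 / 2) *
      (fderiv ℝ (fderiv ℝ F) (fun _ => a) (Pi.single (⟨0, by omega⟩ : Fin k) 1)
          (Pi.single (⟨0, by omega⟩ : Fin k) 1) -
        fderiv ℝ (fderiv ℝ F) (fun _ => a) (Pi.single (⟨0, by omega⟩ : Fin k) 1)
          (Pi.single (⟨1, by omega⟩ : Fin k) 1)))
    (h : Fin k → ℝ) (hsum : ∑ i, h i = 0) :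
    (fun ε : ℝ =>
        F (fun i => a + ε * h i) - F (fun _ => a) - α * ε ^ 2 * ∑ i, (h i) ^ 2)
      =O[nhds 0] fun ε : ℝ => ε ^ 3 := by
  have hinv (σ : Equiv.Perm (Fin k)) : F ∘ ContinuousLinearEquiv.funCongrLeft ℝ ℝ σ = F :=
    funext (hsym σ)
  have hD1 : fderiv ℝ F (fun _ => a) h = 0 := by
    rw [(fderiv ℝ F _).apply_eq_mul_sum_of_comp_perm
      (fun σ u => fderiv_apply_of_comp_eq _ (hinv σ) (fun _ => a) u) ⟨0, by omega⟩, hsum, mul_zero]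
  have hD2 : fderiv ℝ (fderiv ℝ F) (fun _ => a) h h = 2 * α * ∑ i, h i ^ 2 := by
    rw [(fderiv ℝ (fderiv ℝ F) _).apply_apply_eq_of_comp_perm
      (fun σ u v => fderiv_fderiv_apply_of_comp_eq _ (hinv σ) (fun _ => a) u v) (i := ⟨0, by omega⟩)
      (j := ⟨1, by omega⟩) (by simp [Fin.ext_iff]), hsum, hα]
    ring
  refine (hF.isBigO_taylor_two h).congr_left fun ε => ?_
  rw [show (fun _ => a) + ε • h = fun i => a + ε * h i from rfl, hD1, hD2, smul_zero, sub_zero,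
    smul_eq_mul]
  ring
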